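/- Let Θ be an ε-embedding for range(W) with ε < 1, and let R be invertible with ‖ΘWR^{-1} − S‖_F ≤ F₁ and ‖I − SᵀS‖_F ≤ Δ. Then (1+ε)^{-1/2}(1 − Δ − F₁) ≤ σ_min(WR^{-1}) ≤ σ_max(WR^{-1}) ≤ (1−ε)^{-1/2}(1 + Δ + F₁). -/

import Mathlib

open Matrix

/-- Euclidean (ℓ₂) norm of a vector. -/
noncomputable def vecNorm2 {n : ℕ} (v : Fin n → ℝ) : ℝ := Real.sqrt (v ⬝ᵥ v)

/-- Smallest singular value: infimum of ‖A x‖ over unit vectors x. -/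
noncomputable def smin {k m : ℕ} (A : Matrix (Fin k) (Fin m) ℝ) : ℝ :=
  sInf ((fun x => vecNorm2 (A.mulVec x)) '' {x | vecNorm2 x = 1})

/-- Largest singular value (spectral norm): supremum of ‖A x‖ over unit vectors x. -/
noncomputable def smax {k m : ℕ} (A : Matrix (Fin k) (Fin m) ℝ) : ℝ :=
  sSup ((fun x => vecNorm2 (A.mulVec x)) '' {x | vecNorm2 x = 1})

/-- Frobenius norm. -/
noncomputable def frob {k m : ℕ} (A : Matrix (Fin k) (Fin m) ℝ) : ℝ :=
  Real.sqrt (∑ i, ∑ j, (A i j) ^ 2)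

/-!
Fix a unit vector `x` and put `y = W R⁻¹ x`. Writing `t = ‖S x‖`, we have
`|t - 1| ≤ |t² - 1| = |xᵀ (I - SᵀS) x| ≤ ‖I - SᵀS‖_F`, and the Frobenius bound on `ΘWR⁻¹ - S`
moves this to `|‖Θ y‖ - 1| ≤ Δ + F₁`. Since `y = W (R⁻¹ x)` lies in the range of `W`, the
ε-embedding gives `(1 - ε) ‖y‖² ≤ ‖Θ y‖² ≤ (1 + ε) ‖y‖²`, which transfers these bounds to `‖y‖`;
taking the infimum and supremum over unit `x` bounds the extreme singular values.
-/

open WithLp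

theorem inv_sqrt_one_add_mul_le {ε s t : ℝ} (ht : 0 ≤ t) (h : s ^ 2 ≤ (1 + ε) * t ^ 2) :
    (√(1 + ε))⁻¹ * s ≤ t := by
  have hs : s ≤ √(1 + ε) * t := calc
    s ≤ |s| := le_abs_self s
    _ = √(s ^ 2) := (Real.sqrt_sq_eq_abs s).symm
    _ ≤ √((1 + ε) * t ^ 2) := Real.sqrt_le_sqrt h
    _ = √(1 + ε) * t := by rw [Real.sqrt_mul' _ (sq_nonneg t), Real.sqrt_sq ht]
  rcases (Real.sqrt_nonneg (1 + ε)).eq_or_lt with h0 | hpos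
  · rw [← h0, _root_.inv_zero, zero_mul]; exact ht
  · rwa [inv_mul_le_iff₀ hpos]

theorem le_inv_sqrt_one_sub_mul {ε s t : ℝ} (hε : ε < 1) (hs : 0 ≤ s)
    (h : (1 - ε) * t ^ 2 ≤ s ^ 2) : t ≤ (√(1 - ε))⁻¹ * s := by
  rw [le_inv_mul_iff₀ (Real.sqrt_pos.2 (by linarith))]
  calc √(1 - ε) * t ≤ √(1 - ε) * |t| := by gcongr; exact le_abs_self t
    _ = √((1 - ε) * t ^ 2) := by rw [Real.sqrt_mul' _ (sq_nonneg t), Real.sqrt_sq_eq_abs]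
    _ ≤ √(s ^ 2) := Real.sqrt_le_sqrt h
    _ = s := Real.sqrt_sq hs

section
variable {n k m : ℕ}

theorem vecNorm2_eq_norm (v : Fin n → ℝ) : vecNorm2 v = ‖toLp 2 v‖ := by
  simp [vecNorm2, EuclideanSpace.norm_eq, dotProduct, sq]

theorem vecNorm2_nonneg (v : Fin n → ℝ) : 0 ≤ vecNorm2 v := Real.sqrt_nonneg _

theorem vecNorm2_sq (v : Fin n → ℝ) : vecNorm2 v ^ 2 = v ⬝ᵥ v :=
  Real.sq_sqrt (dotProduct_self_star_nonneg v)

theorem abs_dotProduct_le (v w : Fin n → ℝ) : |v ⬝ᵥ w| ≤ vecNorm2 v * vecNorm2 w := by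
  simpa [vecNorm2_eq_norm, EuclideanSpace.inner_eq_star_dotProduct, dotProduct_comm v w] using
    abs_real_inner_le_norm (toLp 2 v) (toLp 2 w)

theorem exists_vecNorm2_eq_one (hn : 0 < n) : ∃ v : Fin n → ℝ, vecNorm2 v = 1 :=
  ⟨Pi.single ⟨0, hn⟩ 1, by simp [vecNorm2]⟩

attribute [local instance] Matrix.frobeniusNormedAddCommGroup in
theorem frob_eq_norm (A : Matrix (Fin k) (Fin m) ℝ) : frob A = ‖A‖ := by
  rw [frobenius_norm_def, frob, Real.sqrt_eq_rpow]
  simp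

attribute [local instance] Matrix.frobeniusNormedAddCommGroup in
theorem vecNorm2_mulVec_le (A : Matrix (Fin k) (Fin m) ℝ) (x : Fin m → ℝ) :
    vecNorm2 (A *ᵥ x) ≤ frob A * vecNorm2 x := by
  simpa [vecNorm2_eq_norm, frob_eq_norm, ← replicateCol_mulVec (ι := Unit)] using
    frobenius_norm_mul A (replicateCol Unit x)

theorem abs_vecNorm2_mulVec_sub_one_le (S : Matrix (Fin k) (Fin m) ℝ) {x : Fin m → ℝ}
    (hx : vecNorm2 x = 1) : |vecNorm2 (S *ᵥ x) - 1| ≤ frob (1 - Sᵀ * S) := by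
  set t := vecNorm2 (S *ᵥ x)
  have hgram : 1 - t ^ 2 = x ⬝ᵥ ((1 - Sᵀ * S) *ᵥ x) := by
    rw [sub_mulVec, dotProduct_sub, one_mulVec, ← mulVec_mulVec, dotProduct_mulVec,
      vecMul_transpose, ← vecNorm2_sq, ← vecNorm2_sq, hx, one_pow]
  have ht : 0 ≤ t := vecNorm2_nonneg _
  calc |t - 1| ≤ |t - 1| * (t + 1) := le_mul_of_one_le_right (abs_nonneg _) (by linarith)
    _ = |1 - t ^ 2| := by
      rw [← abs_of_nonneg (by linarith : 0 ≤ t + 1), ← abs_mul, abs_sub_comm]; ring_nf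
    _ ≤ vecNorm2 x * vecNorm2 ((1 - Sᵀ * S) *ᵥ x) := hgram ▸ abs_dotProduct_le _ _
    _ ≤ frob (1 - Sᵀ * S) := by simpa [hx] using vecNorm2_mulVec_le (1 - Sᵀ * S) x

theorem abs_vecNorm2_mulVec_sub_le (M S : Matrix (Fin k) (Fin m) ℝ) (x : Fin m → ℝ) :
    |vecNorm2 (M *ᵥ x) - vecNorm2 (S *ᵥ x)| ≤ frob (M - S) * vecNorm2 x := calc
  _ ≤ vecNorm2 (M *ᵥ x - S *ᵥ x) := by
    simpa only [vecNorm2_eq_norm, toLp_sub] using abs_norm_sub_norm_le _ _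
  _ = vecNorm2 ((M - S) *ᵥ x) := by rw [sub_mulVec]
  _ ≤ _ := vecNorm2_mulVec_le _ _

theorem abs_vecNorm2_mulVec_sub_one_le_frob_add (M S : Matrix (Fin k) (Fin m) ℝ)
    {x : Fin m → ℝ} (hx : vecNorm2 x = 1) :
    |vecNorm2 (M *ᵥ x) - 1| ≤ frob (1 - Sᵀ * S) + frob (M - S) := by
  have hS := abs_vecNorm2_mulVec_sub_one_le S hx
  have hMS := abs_vecNorm2_mulVec_sub_le M S x
  rw [hx, mul_one] at hMS
  calc _ ≤ |vecNorm2 (M *ᵥ x) - vecNorm2 (S *ᵥ x)| + |vecNorm2 (S *ᵥ x) - 1| :=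
        abs_sub_le _ _ _
    _ ≤ _ := by linarith

theorem le_smin {A : Matrix (Fin k) (Fin m) ℝ} {c : ℝ} (hm : 0 < m)
    (h : ∀ x, vecNorm2 x = 1 → c ≤ vecNorm2 (A *ᵥ x)) : c ≤ smin A := by
  obtain ⟨x, hx⟩ := exists_vecNorm2_eq_one hm
  exact le_csInf ⟨_, x, hx, rfl⟩ (by rintro _ ⟨y, hy, rfl⟩; exact h y hy)

theorem smax_le {A : Matrix (Fin k) (Fin m) ℝ} {c : ℝ} (hm : 0 < m)
    (h : ∀ x, vecNorm2 x = 1 → vecNorm2 (A *ᵥ x) ≤ c) : smax A ≤ c := by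
  obtain ⟨x, hx⟩ := exists_vecNorm2_eq_one hm
  exact csSup_le ⟨_, x, hx, rfl⟩ (by rintro _ ⟨y, hy, rfl⟩; exact h y hy)

theorem smin_le_smax (hm : 0 < m) (A : Matrix (Fin k) (Fin m) ℝ) : smin A ≤ smax A := by
  obtain ⟨x, hx⟩ := exists_vecNorm2_eq_one hm
  have hmem : vecNorm2 (A *ᵥ x) ∈ (fun x => vecNorm2 (A *ᵥ x)) '' {x | vecNorm2 x = 1} :=
    ⟨x, hx, rfl⟩
  refine (csInf_le ⟨0, ?_⟩ hmem).trans (le_csSup ⟨frob A, ?_⟩ hmem)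
  · rintro _ ⟨y, -, rfl⟩; exact vecNorm2_nonneg _
  · rintro _ ⟨y, hy : vecNorm2 y = 1, rfl⟩; simpa only [hy, mul_one] using vecNorm2_mulVec_le A y
end

theorem singular_values_WRinv_bounds_general {n m k : ℕ} (hm : 0 < m)
    (W : Matrix (Fin n) (Fin m) ℝ) (R : Matrix (Fin m) (Fin m) ℝ)
    (Θ : Matrix (Fin k) (Fin n) ℝ) (S : Matrix (Fin k) (Fin m) ℝ)
    (ε F₁ Δ : ℝ) (hε : ε < 1)
    (hemb : ∀ a b : Fin m → ℝ,
      |(W.mulVec a) ⬝ᵥ (W.mulVec b) - (Θ.mulVec (W.mulVec a)) ⬝ᵥ (Θ.mulVec (W.mulVec b))|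
        ≤ ε * vecNorm2 (W.mulVec a) * vecNorm2 (W.mulVec b))
    (hF : frob (Θ * W * R⁻¹ - S) ≤ F₁) (hΔ : frob (1 - Sᵀ * S) ≤ Δ) :
    (Real.sqrt (1 + ε))⁻¹ * (1 - Δ - F₁) ≤ smin (W * R⁻¹) ∧
      smin (W * R⁻¹) ≤ smax (W * R⁻¹) ∧
      smax (W * R⁻¹) ≤ (Real.sqrt (1 - ε))⁻¹ * (1 + Δ + F₁) := by
  have hsketch (x : Fin m → ℝ) (hx : vecNorm2 x = 1) :
      |vecNorm2 ((Θ * W * R⁻¹) *ᵥ x) - 1| ≤ Δ + F₁ :=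
    (abs_vecNorm2_mulVec_sub_one_le_frob_add _ S hx).trans (add_le_add hΔ hF)
  have hnorms (x : Fin m → ℝ) : |vecNorm2 ((W * R⁻¹) *ᵥ x) ^ 2
      - vecNorm2 ((Θ * W * R⁻¹) *ᵥ x) ^ 2| ≤ ε * vecNorm2 ((W * R⁻¹) *ᵥ x) ^ 2 := by
    have h := hemb (R⁻¹ *ᵥ x) (R⁻¹ *ᵥ x)
    rwa [mulVec_mulVec, mulVec_mulVec, ← Matrix.mul_assoc, ← vecNorm2_sq, ← vecNorm2_sq,
      mul_assoc, ← sq] at h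
  refine ⟨le_smin hm fun x hx => ?_, smin_le_smax hm _, smax_le hm fun x hx => ?_⟩
  · obtain ⟨hlo, -⟩ := abs_le.1 (hsketch x hx)
    obtain ⟨hdown, -⟩ := abs_le.1 (hnorms x)
    calc (√(1 + ε))⁻¹ * (1 - Δ - F₁) ≤ (√(1 + ε))⁻¹ * vecNorm2 ((Θ * W * R⁻¹) *ᵥ x) := by
          gcongr; linarith
      _ ≤ _ := inv_sqrt_one_add_mul_le (vecNorm2_nonneg _) (by linarith)
  · obtain ⟨-, hhi⟩ := abs_le.1 (hsketch x hx)
    obtain ⟨-, hup⟩ := abs_le.1 (hnorms x)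
    calc vecNorm2 ((W * R⁻¹) *ᵥ x) ≤ (√(1 - ε))⁻¹ * vecNorm2 ((Θ * W * R⁻¹) *ᵥ x) :=
          le_inv_sqrt_one_sub_mul hε (vecNorm2_nonneg _) (by linarith)
      _ ≤ _ := by gcongr; linarith

/-- Singular value bounds on W R⁻¹ via the approximate orthonormality of its sketch. -/
theorem singular_values_WRinv_bounds {n m k : ℕ} (hm : 0 < m)
    (W : Matrix (Fin n) (Fin m) ℝ) (R : Matrix (Fin m) (Fin m) ℝ) (hR : IsUnit R)
    (Θ : Matrix (Fin k) (Fin n) ℝ) (S : Matrix (Fin k) (Fin m) ℝ)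
    (ε F₁ Δ : ℝ) (hε : ε < 1)
    (hemb : ∀ a b : Fin m → ℝ,
      |(W.mulVec a) ⬝ᵥ (W.mulVec b) - (Θ.mulVec (W.mulVec a)) ⬝ᵥ (Θ.mulVec (W.mulVec b))|
        ≤ ε * vecNorm2 (W.mulVec a) * vecNorm2 (W.mulVec b))
    (hF : frob (Θ * W * R⁻¹ - S) ≤ F₁) (hΔ : frob (1 - Sᵀ * S) ≤ Δ) :
    (Real.sqrt (1 + ε))⁻¹ * (1 - Δ - F₁) ≤ smin (W * R⁻¹) ∧
      smin (W * R⁻¹) ≤ smax (W * R⁻¹) ∧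
      smax (W * R⁻¹) ≤ (Real.sqrt (1 - ε))⁻¹ * (1 + Δ + F₁) :=
  singular_values_WRinv_bounds_general hm W R Θ S ε F₁ Δ hε hemb hF hΔ
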